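/- Let X ~ GMM(μ*, π) be a mixture of K spherical unit-variance Gaussians in ℝ^d with centers μ_1*, ..., μ_K* and weights π_1,...,π_K (positive, summing to 1), with 0 < λ < 1/2, and suppose R_min > √((2/(1−2λ)) log θ) where θ = π_max/π_min and R_min = min_{i≠j}‖μ_i*−μ_j*‖. Then for any μ ∈ U_λ (i.e. ‖μ_k − μ_k*‖ ≤ λ R_k for all k, with R_k = min_{j≠k} ‖μ_j*−μ_k*‖) and all j ≠ i: E_{X~N(μ_i*, I_d)}[w_j(X,μ)] ≤ (1 + π_j/π_i) e^{-c(λ) R_{ij}²}, where R_{ij} = ‖μ_i*−μ_j*‖, c(λ) = (1/8)((1−2λ)/(1+2λ))², and w_j(x,μ) = π_j e^{-‖x−μ_j‖²/2} / Σ_k π_k e^{-‖x−μ_k‖²/2}. -/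

import Mathlib

open MeasureTheory Real

/-- Density of the `N(m, I_d)` Gaussian on `ℝ^d`. -/
noncomputable def gaussDensity {d : ℕ} (m x : EuclideanSpace ℝ (Fin d)) : ℝ :=
  (2 * Real.pi) ^ (-(d : ℝ) / 2) * Real.exp (-‖x - m‖ ^ 2 / 2)

/-- EM posterior membership weight of component `j` given candidate centers `μ`. -/
noncomputable def wEM {d K : ℕ} (p : Fin K → ℝ) (μ : Fin K → EuclideanSpace ℝ (Fin d))
    (j : Fin K) (x : EuclideanSpace ℝ (Fin d)) : ℝ :=
  p j * Real.exp (-‖x - μ j‖ ^ 2 / 2) / ∑ k, p k * Real.exp (-‖x - μ k‖ ^ 2 / 2)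

/-- `R_k = min_{j ≠ k} ‖μ_j* - μ_k*‖`. -/
noncomputable def Rsep {d K : ℕ} (μs : Fin K → EuclideanSpace ℝ (Fin d)) (k : Fin K) : ℝ :=
  sInf {r | ∃ j, j ≠ k ∧ r = ‖μs j - μs k‖}

/-- `R_min = min_{i ≠ j} ‖μ_i* - μ_j*‖`. -/
noncomputable def Rmin {d K : ℕ} (μs : Fin K → EuclideanSpace ℝ (Fin d)) : ℝ :=
  sInf {r | ∃ i j, i ≠ j ∧ r = ‖μs i - μs j‖}

/-- `θ = π_max / π_min`. -/
noncomputable def thetaRatio {K : ℕ} (p : Fin K → ℝ) : ℝ :=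
  sSup (Set.range p) / sInf (Set.range p)

/-- The exponent constant `c(λ)`. -/
noncomputable def clam (lam : ℝ) : ℝ := (1 / 8) * ((1 - 2 * lam) / (1 + 2 * lam)) ^ 2

/-! Bound the posterior weight by `w_j ≤ min (1, (π_j/π_i) e^{E(x)}) ≤ (π_j/π_i)^α e^{α E(x)}` for
`α ∈ [0, 1]`, where `E(x) = (‖x - μ_i‖² - ‖x - μ_j‖²)/2` is affine in `x`. Then the expectation of
`e^{α E(X)}` under `N(μ_i*, I)` is computed exactly by completing the square, and its exponent is
bounded using `‖μ_k - μ_k*‖ ≤ λ ‖μ_i* - μ_j*‖` for `k = i, j`; the choice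
`α = (1 - 2λ) / (2 (1 + 2λ)²)` turns it into `-c(λ) ‖μ_i* - μ_j*‖²`. Finally `(π_j/π_i)^α ≤ 1 + π_j/π_i`. -/

section Gaussian

variable {d : ℕ}

lemma gaussDensity_nonneg (m x : EuclideanSpace ℝ (Fin d)) : 0 ≤ gaussDensity m x := by
  unfold gaussDensity; positivity

lemma integral_gaussDensity (m : EuclideanSpace ℝ (Fin d)) : ∫ x, gaussDensity m x = 1 := by
  have hshift : ∫ x : EuclideanSpace ℝ (Fin d), rexp (-‖x - m‖ ^ 2 / 2)
      = ∫ x : EuclideanSpace ℝ (Fin d), rexp (-(1 / 2) * ‖x‖ ^ 2) := by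
    rw [integral_sub_right_eq_self (fun y => rexp (-‖y‖ ^ 2 / 2)) m]
    congr 1 with x; ring_nf
  unfold gaussDensity
  rw [integral_const_mul, hshift,
    GaussianFourier.integral_rexp_neg_mul_sq_norm (by norm_num), finrank_euclideanSpace_fin,
    show π / (1 / 2 : ℝ) = 2 * π by ring, ← rpow_add (by positivity),
    neg_div, neg_add_cancel, rpow_zero]

lemma integrable_gaussDensity (m : EuclideanSpace ℝ (Fin d)) : Integrable (gaussDensity m) :=
  .of_integral_ne_zero <| (integral_gaussDensity m).symm ▸ one_ne_zero

lemma exp_mul_gaussDensity (a b m x : EuclideanSpace ℝ (Fin d)) (α : ℝ) :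
    rexp (α * ((‖x - a‖ ^ 2 - ‖x - b‖ ^ 2) / 2)) * gaussDensity m x
      = rexp (α * ((‖m - a‖ ^ 2 - ‖m - b‖ ^ 2) / 2) + α ^ 2 * ‖b - a‖ ^ 2 / 2)
        * gaussDensity (m + α • (b - a)) x := by
  have hsq : α * ((‖x - a‖ ^ 2 - ‖x - b‖ ^ 2) / 2) - ‖x - m‖ ^ 2 / 2
      = α * ((‖m - a‖ ^ 2 - ‖m - b‖ ^ 2) / 2) + α ^ 2 * ‖b - a‖ ^ 2 / 2
        - ‖x - (m + α • (b - a))‖ ^ 2 / 2 := by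
    rw [sub_add_eq_sub_sub, norm_sub_sq_real (x - m)]
    simp only [norm_sub_sq_real, norm_smul, inner_sub_left, inner_sub_right,
      real_inner_smul_right, real_inner_comm, Real.norm_eq_abs, mul_pow, sq_abs]
    ring
  simp only [gaussDensity, mul_left_comm (rexp _), ← exp_add]
  congr 2
  linarith

end Gaussian

section Weights

variable {d K : ℕ} {p : Fin K → ℝ} (μ : Fin K → EuclideanSpace ℝ (Fin d))

lemma wEM_nonneg (hp : ∀ k, 0 < p k) (j : Fin K) (x : EuclideanSpace ℝ (Fin d)) :
    0 ≤ wEM p μ j x := by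
  unfold wEM
  exact div_nonneg (by have := hp j; positivity)
    (Finset.sum_nonneg fun k _ => by have := hp k; positivity)

lemma mul_exp_le_sum_mul_exp (hp : ∀ k, 0 < p k) (k : Fin K) (x : EuclideanSpace ℝ (Fin d)) :
    p k * rexp (-‖x - μ k‖ ^ 2 / 2) ≤ ∑ l, p l * rexp (-‖x - μ l‖ ^ 2 / 2) :=
  Finset.single_le_sum (f := fun l => p l * rexp (-‖x - μ l‖ ^ 2 / 2))
    (fun l _ => by have := hp l; positivity) (Finset.mem_univ k)

lemma wEM_le_one (hp : ∀ k, 0 < p k) (j : Fin K) (x : EuclideanSpace ℝ (Fin d)) :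
    wEM p μ j x ≤ 1 :=
  div_le_one_of_le₀ (mul_exp_le_sum_mul_exp μ hp j x)
    (Finset.sum_nonneg fun k _ => by have := hp k; positivity)

lemma wEM_le_div_mul_exp (hp : ∀ k, 0 < p k) (i j : Fin K) (x : EuclideanSpace ℝ (Fin d)) :
    wEM p μ j x ≤ p j / p i * rexp ((‖x - μ i‖ ^ 2 - ‖x - μ j‖ ^ 2) / 2) := by
  calc wEM p μ j x
      ≤ p j * rexp (-‖x - μ j‖ ^ 2 / 2) / (p i * rexp (-‖x - μ i‖ ^ 2 / 2)) :=
        div_le_div_of_nonneg_left (by have := hp j; positivity)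
          (by have := hp i; positivity) (mul_exp_le_sum_mul_exp μ hp i x)
    _ = p j / p i * rexp ((‖x - μ i‖ ^ 2 - ‖x - μ j‖ ^ 2) / 2) := by
        rw [mul_div_mul_comm, ← exp_sub]
        ring_nf

lemma le_rpow_of_le_one_of_le {w z α : ℝ} (hw1 : w ≤ 1) (hwz : w ≤ z) (hz : 0 < z)
    (hα0 : 0 ≤ α) (hα1 : α ≤ 1) : w ≤ z ^ α := by
  rcases le_total z 1 with h | h
  · exact hwz.trans (by simpa using rpow_le_rpow_of_exponent_ge hz h hα1)
  · exact hw1.trans (one_le_rpow h hα0)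

lemma wEM_le_rpow_mul_exp (hp : ∀ k, 0 < p k) {α : ℝ} (hα0 : 0 ≤ α) (hα1 : α ≤ 1)
    (i j : Fin K) (x : EuclideanSpace ℝ (Fin d)) :
    wEM p μ j x ≤ (p j / p i) ^ α * rexp (α * ((‖x - μ i‖ ^ 2 - ‖x - μ j‖ ^ 2) / 2)) := by
  have hr : 0 < p j / p i := div_pos (hp j) (hp i)
  calc wEM p μ j x
      ≤ (p j / p i * rexp ((‖x - μ i‖ ^ 2 - ‖x - μ j‖ ^ 2) / 2)) ^ α :=
        le_rpow_of_le_one_of_le (wEM_le_one μ hp j x) (wEM_le_div_mul_exp μ hp i j x)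
          (by positivity) hα0 hα1
    _ = (p j / p i) ^ α * rexp (α * ((‖x - μ i‖ ^ 2 - ‖x - μ j‖ ^ 2) / 2)) := by
        rw [mul_rpow hr.le (exp_nonneg _), ← exp_mul, mul_comm _ α]

lemma integral_wEM_mul_gaussDensity_le (hp : ∀ k, 0 < p k) {α : ℝ} (hα0 : 0 ≤ α)
    (hα1 : α ≤ 1) (i j : Fin K) (m : EuclideanSpace ℝ (Fin d)) :
    ∫ x, wEM p μ j x * gaussDensity m x
      ≤ (p j / p i) ^ α
        * rexp (α * ((‖m - μ i‖ ^ 2 - ‖m - μ j‖ ^ 2) / 2) + α ^ 2 * ‖μ j - μ i‖ ^ 2 / 2) := by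
  set m' := m + α • (μ j - μ i)
  have hbound : ∀ x, wEM p μ j x * gaussDensity m x ≤ (p j / p i) ^ α
      * rexp (α * ((‖m - μ i‖ ^ 2 - ‖m - μ j‖ ^ 2) / 2) + α ^ 2 * ‖μ j - μ i‖ ^ 2 / 2)
      * gaussDensity m' x := fun x => by
    rw [mul_assoc, ← exp_mul_gaussDensity, ← mul_assoc]
    exact mul_le_mul_of_nonneg_right (wEM_le_rpow_mul_exp μ hp hα0 hα1 i j x)
      (gaussDensity_nonneg m x)
  refine (integral_mono_of_nonneg (.of_forall fun x => ?_)
    ((integrable_gaussDensity m').const_mul _) (.of_forall hbound)).trans_eq ?_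
  · exact mul_nonneg (wEM_nonneg μ hp j x) (gaussDensity_nonneg m x)
  · rw [integral_const_mul, integral_gaussDensity, mul_one]

end Weights

section Exponent

variable {E : Type*} [SeminormedAddCommGroup E]

lemma sq_norm_sub_sub_sq_norm_sub_le {lam : ℝ} (hl : lam ≤ 1) {mi mj ai aj : E}
    (hi : ‖mi - ai‖ ≤ lam * ‖mi - mj‖) (hj : ‖mj - aj‖ ≤ lam * ‖mi - mj‖) :
    (‖mi - ai‖ ^ 2 - ‖mi - aj‖ ^ 2) / 2 ≤ -((1 - 2 * lam) / 2) * ‖mi - mj‖ ^ 2 := by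
  have hfar : (1 - lam) * ‖mi - mj‖ ≤ ‖mi - aj‖ := by
    linarith [norm_sub_le_norm_sub_add_norm_sub mi aj mj, norm_sub_rev aj mj]
  have hnear_sq := pow_le_pow_left₀ (norm_nonneg _) hi 2
  have hfar_sq := pow_le_pow_left₀ (mul_nonneg (by linarith) (norm_nonneg _)) hfar 2
  nlinarith

lemma norm_sub_le_one_add_two_mul {lam : ℝ} {mi mj ai aj : E}
    (hi : ‖mi - ai‖ ≤ lam * ‖mi - mj‖) (hj : ‖mj - aj‖ ≤ lam * ‖mi - mj‖) :
    ‖aj - ai‖ ≤ (1 + 2 * lam) * ‖mi - mj‖ := by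
  linarith [norm_sub_le_norm_sub_add_norm_sub aj mj ai, norm_sub_le_norm_sub_add_norm_sub mj mi ai,
    norm_sub_rev aj mj, norm_sub_rev mj mi]

/-- `α = (1 - 2λ) / (2 (1 + 2λ)²)` minimises `-α (1 - 2λ) R² / 2 + α² (1 + 2λ)² R² / 2`, whose
minimum is `-c(λ) R²`. -/
lemma tilt_exponent_le_neg_clam {lam : ℝ} (hl0 : 0 ≤ lam) (hl2 : lam < 1 / 2) {mi mj ai aj : E}
    (hi : ‖mi - ai‖ ≤ lam * ‖mi - mj‖) (hj : ‖mj - aj‖ ≤ lam * ‖mi - mj‖) :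
    (1 - 2 * lam) / (2 * (1 + 2 * lam) ^ 2) * ((‖mi - ai‖ ^ 2 - ‖mi - aj‖ ^ 2) / 2)
      + ((1 - 2 * lam) / (2 * (1 + 2 * lam) ^ 2)) ^ 2 * ‖aj - ai‖ ^ 2 / 2
      ≤ -clam lam * ‖mi - mj‖ ^ 2 := by
  set α := (1 - 2 * lam) / (2 * (1 + 2 * lam) ^ 2)
  have hα : 0 ≤ α := by apply div_nonneg <;> nlinarith
  have hlin := mul_le_mul_of_nonneg_left
    (sq_norm_sub_sub_sq_norm_sub_le (by linarith) hi hj) hα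
  have hquad : α ^ 2 * ‖aj - ai‖ ^ 2 / 2 ≤ α ^ 2 * ((1 + 2 * lam) * ‖mi - mj‖) ^ 2 / 2 := by
    gcongr
    exact norm_sub_le_one_add_two_mul hi hj
  have hmin : α * (-((1 - 2 * lam) / 2) * ‖mi - mj‖ ^ 2)
      + α ^ 2 * ((1 + 2 * lam) * ‖mi - mj‖) ^ 2 / 2 = -clam lam * ‖mi - mj‖ ^ 2 := by
    have : 1 + 2 * lam ≠ 0 := by linarith
    simp only [α, clam]
    field_simp
    ring
  linarith

end Exponent

lemma Rsep_le_norm_sub {d K : ℕ} (μs : Fin K → EuclideanSpace ℝ (Fin d)) {j k : Fin K}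
    (h : j ≠ k) : Rsep μs k ≤ ‖μs j - μs k‖ :=
  csInf_le ⟨0, by rintro _ ⟨_, _, rfl⟩; exact norm_nonneg _⟩ ⟨j, h, rfl⟩

lemma rpow_le_one_add {r α : ℝ} (hr : 0 ≤ r) (hα0 : 0 ≤ α) (hα1 : α ≤ 1) :
    r ^ α ≤ 1 + r := by
  have hbern := rpow_one_add_le_one_add_mul_self (s := r - 1) (by linarith) hα0 hα1
  rw [add_sub_cancel] at hbern
  rcases le_total r 1 with h | h <;> nlinarith

theorem stmt6_general {d K : ℕ} (μs μ : Fin K → EuclideanSpace ℝ (Fin d)) (p : Fin K → ℝ)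
    (lam : ℝ) (hl1 : 0 < lam) (hl2 : lam < 1 / 2)
    (hp : ∀ k, 0 < p k)
    (hU : ∀ k, ‖μ k - μs k‖ ≤ lam * Rsep μs k) :
    ∀ i j, j ≠ i →
      (∫ x, wEM p μ j x * gaussDensity (μs i) x) ≤
        (1 + p j / p i) * Real.exp (-(clam lam) * ‖μs i - μs j‖ ^ 2) := by
  intro i j hji
  set α := (1 - 2 * lam) / (2 * (1 + 2 * lam) ^ 2)
  have hα0 : 0 ≤ α := by apply div_nonneg <;> nlinarith
  have hα1 : α ≤ 1 := by rw [div_le_one (by positivity)]; nlinarith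
  have hi : ‖μs i - μ i‖ ≤ lam * ‖μs i - μs j‖ := by
    rw [norm_sub_rev, norm_sub_rev (μs i)]
    exact (hU i).trans (mul_le_mul_of_nonneg_left (Rsep_le_norm_sub μs hji) hl1.le)
  have hj : ‖μs j - μ j‖ ≤ lam * ‖μs i - μs j‖ := by
    rw [norm_sub_rev]
    exact (hU j).trans (mul_le_mul_of_nonneg_left (Rsep_le_norm_sub μs hji.symm) hl1.le)
  calc ∫ x, wEM p μ j x * gaussDensity (μs i) x
      ≤ (p j / p i) ^ α * rexp (α * ((‖μs i - μ i‖ ^ 2 - ‖μs i - μ j‖ ^ 2) / 2)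
          + α ^ 2 * ‖μ j - μ i‖ ^ 2 / 2) :=
        integral_wEM_mul_gaussDensity_le μ hp hα0 hα1 i j (μs i)
    _ ≤ (1 + p j / p i) * rexp (-clam lam * ‖μs i - μs j‖ ^ 2) :=
        mul_le_mul (rpow_le_one_add (div_pos (hp j) (hp i)).le hα0 hα1)
          (exp_le_exp.mpr (tilt_exponent_le_neg_clam hl1.le hl2 hi hj)) (exp_nonneg _)
          (by have := div_pos (hp j) (hp i); positivity)

theorem stmt6 {d K : ℕ} (μs μ : Fin K → EuclideanSpace ℝ (Fin d)) (p : Fin K → ℝ)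
    (lam : ℝ) (hl1 : 0 < lam) (hl2 : lam < 1 / 2)
    (hp : ∀ k, 0 < p k) (hps : ∑ k, p k = 1)
    (hsep : Rmin μs > Real.sqrt ((2 / (1 - 2 * lam)) * Real.log (thetaRatio p)))
    (hU : ∀ k, ‖μ k - μs k‖ ≤ lam * Rsep μs k) :
    ∀ i j, j ≠ i →
      (∫ x, wEM p μ j x * gaussDensity (μs i) x) ≤
        (1 + p j / p i) * Real.exp (-(clam lam) * ‖μs i - μs j‖ ^ 2) :=
  stmt6_general μs μ p lam hl1 hl2 hp hU
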